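/- For integers n and Δ with 2 ≤ Δ ≤ n−1, the broom B(n,Δ) satisfies ecc(B(n,Δ)) + α(B(n,Δ)) = 5n/4 − Δ(Δ−2)/(4n) − 1/2 if n−Δ is even, and ecc(B(n,Δ)) + α(B(n,Δ)) = 5n/4 − Δ(Δ−2)/(4n) − 1/(4n) if n−Δ is odd. -/

import Mathlib

open SimpleGraph

/-- The eccentricity of a vertex: the maximum distance from it to any other vertex. -/
noncomputable def eccentricity {V : Type*} [Fintype V] (G : SimpleGraph V) (v : V) : ℕ :=
  Finset.univ.sup fun u => G.dist v u

/-- The average eccentricity of a graph. -/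
noncomputable def avgEcc {V : Type*} [Fintype V] (G : SimpleGraph V) : ℝ :=
  (∑ v : V, (eccentricity G v : ℝ)) / (Fintype.card V : ℝ)

/-- The independence number: the maximum cardinality of a set of pairwise
non-adjacent vertices. -/
noncomputable def indepNum {V : Type*} (G : SimpleGraph V) : ℕ :=
  sSup {m | ∃ s : Finset V, s.card = m ∧ ∀ u ∈ s, ∀ w ∈ s, u ≠ w → ¬ G.Adj u w}

/-- The broom `B(n, Δ)`: a path `0 — 1 — ⋯ — (n-Δ)` together with `Δ-1` pendant
vertices `n-Δ+1, …, n-1` attached to the vertex `n-Δ`. -/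
def broom (n Δ : ℕ) : SimpleGraph (Fin n) :=
  SimpleGraph.fromRel (fun i j =>
    ((i : ℕ) + 1 = (j : ℕ) ∧ (j : ℕ) ≤ n - Δ) ∨ ((i : ℕ) = n - Δ ∧ n - Δ < (j : ℕ)))

/-
Write `n = Δ + p`. Identifying all pendants with `p + 1` maps the broom onto a path, and this level
map `v ↦ min v (p + 1)` changes by at most one along an edge; since the handle `0 — ⋯ — p` and the
pendants realise these level differences (two pendants being at distance `2 ≤ p + 1`), every vertex
has eccentricity `max (min v (p + 1)) (p + 1 - min v (p + 1))`. Summing,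
`4 ∑ ε = 3 (p + 1)² + 1 - p % 2 + 4 (Δ - 1) (p + 1)`. The broom is covered by `⌈p/2⌉ + Δ - 1`
cliques, and the even vertices below `p` together with all pendants form an independent set of
that size, so `α = ⌈p/2⌉ + Δ - 1`.
-/

namespace SimpleGraph

variable {V : Type*} {G : SimpleGraph V}

theorem Walk.apply_le_apply_add_length {f : V → ℕ} (hf : ∀ ⦃u v⦄, G.Adj u v → f v ≤ f u + 1)
    {u v : V} (w : G.Walk u v) : f v ≤ f u + w.length := by
  induction w with
  | nil => simp
  | cons h _ ih =>
    rw [Walk.length_cons]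
    have := hf h
    omega

theorem Reachable.apply_le_apply_add_dist {f : V → ℕ} (hf : ∀ ⦃u v⦄, G.Adj u v → f v ≤ f u + 1)
    {u v : V} (h : G.Reachable u v) : f v ≤ f u + G.dist u v := by
  obtain ⟨w, hw⟩ := h.exists_walk_length_eq_dist
  exact hw ▸ w.apply_le_apply_add_length hf

theorem IsIndepSet.card_le_of_isClique_fiber {W : Type*} {s : Finset V} (hs : G.IsIndepSet s)
    {t : Finset W} {f : V → W} (hf : Set.MapsTo f s t) (hfib : ∀ w, G.IsClique (f ⁻¹' {w})) :
    s.card ≤ t.card :=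
  Finset.card_le_card_of_injOn f hf fun _ hu v hv huv => by_contra fun hne =>
    hs hu hv hne (hfib (f v) huv rfl hne)

end SimpleGraph

theorem indepNum_eq_simpleGraph_indepNum {V : Type*} (G : SimpleGraph V) :
    _root_.indepNum G = G.indepNum := by
  simp only [_root_.indepNum, SimpleGraph.indepNum, isNIndepSet_iff, and_comm]
  rfl

theorem dist_le_eccentricity {V : Type*} [Fintype V] (G : SimpleGraph V) (v u : V) :
    G.dist v u ≤ eccentricity G v :=
  Finset.le_sup (f := G.dist v) (Finset.mem_univ u)

theorem sum_range_max_sub_add_two (p : ℕ) :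
    ∑ i ∈ Finset.range (p + 3), max i (p + 3 - i) =
      ∑ i ∈ Finset.range (p + 1), max i (p + 1 - i) + 3 * p + 6 := by
  have shift : ∀ i ∈ Finset.range (p + 2), max (i + 1) (p + 3 - (i + 1)) = max i (p + 1 - i) + 1 :=
    fun i hi => by rw [Finset.mem_range] at hi; omega
  rw [Finset.sum_range_succ', Finset.sum_congr rfl shift, Finset.sum_add_distrib,
    Finset.sum_range_succ]
  simp only [tsub_self, zero_le, sup_of_le_left, Finset.sum_const, Finset.card_range,
    smul_eq_mul, mul_one, tsub_zero, le_add_iff_nonneg_left, sup_of_le_right]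
  omega

theorem four_mul_sum_range_max_sub_add_mod_two (p : ℕ) :
    4 * ∑ i ∈ Finset.range (p + 1), max i (p + 1 - i) + p % 2 = 3 * (p + 1) ^ 2 + 1 := by
  induction p using Nat.twoStepInduction with
  | zero => simp
  | one => simp [Finset.sum_range_succ]
  | more p ih _ =>
    rw [sum_range_max_sub_add_two, Nat.add_mod_right]
    linarith

section Broom

variable {Δ p : ℕ}

theorem broom_adj_iff {u v : Fin (Δ + p)} :
    (broom (Δ + p) Δ).Adj u v ↔ ((u : ℕ) + 1 = v ∧ (v : ℕ) ≤ p) ∨ ((v : ℕ) + 1 = u ∧ (u : ℕ) ≤ p) ∨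
      ((u : ℕ) = p ∧ p < v) ∨ ((v : ℕ) = p ∧ p < u) := by
  simp only [broom, fromRel_adj, Nat.add_sub_cancel_left]
  refine ⟨fun h => by omega, fun h => ⟨fun huv => ?_, by omega⟩⟩
  subst huv
  omega

theorem broom_exists_walk {i j : Fin (Δ + p)} (hij : i ≤ j) (hj : (j : ℕ) ≤ p) :
    ∃ w : (broom (Δ + p) Δ).Walk i j, w.length = j - i := by
  obtain ⟨k, hk⟩ : ∃ k, (j : ℕ) = i + k := ⟨j - i, by omega⟩
  induction k generalizing i with
  | zero =>
    obtain rfl : i = j := Fin.ext (by omega)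
    exact ⟨.nil, by simp⟩
  | succ k ih =>
    let i' : Fin (Δ + p) := ⟨i + 1, by omega⟩
    obtain ⟨w, hw⟩ :=
      ih (i := i') (Fin.le_iff_val_le_val.2 (by simp [i']; omega)) (by simp [i']; omega)
    exact ⟨.cons (broom_adj_iff.2 (by simp [i']; omega)) w, by simp [hw, i']; omega⟩

theorem broom_dist_le_sub {i j : Fin (Δ + p)} (hij : i ≤ j) (hj : (j : ℕ) ≤ p) :
    (broom (Δ + p) Δ).dist i j ≤ j - i :=
  let ⟨w, hw⟩ := broom_exists_walk hij hj
  hw ▸ dist_le w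

theorem broom_connected (hΔ : 1 ≤ Δ) : (broom (Δ + p) Δ).Connected := by
  let c : Fin (Δ + p) := ⟨p, by omega⟩
  refine (connected_iff_exists_forall_reachable _).2 ⟨c, fun v => ?_⟩
  rcases le_or_gt (v : ℕ) p with hv | hv
  · obtain ⟨w, -⟩ := broom_exists_walk (i := v) (j := c) (Fin.le_iff_val_le_val.2 hv) le_rfl
    exact w.reachable.symm
  · exact (broom_adj_iff.2 (by simp [c, hv])).reachable

theorem broom_min_le_min_add_dist (hΔ : 1 ≤ Δ) (u v : Fin (Δ + p)) :
    min (v : ℕ) (p + 1) ≤ min (u : ℕ) (p + 1) + (broom (Δ + p) Δ).dist u v :=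
  ((broom_connected hΔ).preconnected u v).apply_le_apply_add_dist
    (f := fun x : Fin (Δ + p) => min (x : ℕ) (p + 1)) fun _ _ h => by
      rw [broom_adj_iff] at h
      omega

theorem broom_dist_le (hΔ : 1 ≤ Δ) (hp : 1 ≤ p) (u v : Fin (Δ + p)) :
    (broom (Δ + p) Δ).dist u v ≤ max (min (u : ℕ) (p + 1)) (p + 1 - min (u : ℕ) (p + 1)) := by
  let c : Fin (Δ + p) := ⟨p, by omega⟩
  have to_center {x : Fin (Δ + p)} (hx : (x : ℕ) ≤ p) : (broom (Δ + p) Δ).dist x c ≤ p - x :=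
    broom_dist_le_sub (Fin.le_iff_val_le_val.2 hx) le_rfl
  have pendant_to_center {x : Fin (Δ + p)} (hx : p < (x : ℕ)) : (broom (Δ + p) Δ).dist x c ≤ 1 :=
    (dist_eq_one_iff_adj.2 (broom_adj_iff.2 (by simp [c, hx]))).le
  have via_center : (broom (Δ + p) Δ).dist u v ≤
      (broom (Δ + p) Δ).dist u c + (broom (Δ + p) Δ).dist v c :=
    SimpleGraph.dist_comm (u := c) (v := v) ▸ (broom_connected hΔ).dist_triangle
  rcases le_or_gt (u : ℕ) p with hu | hu <;> rcases le_or_gt (v : ℕ) p with hv | hv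
  · rcases le_total u v with huv | hvu
    · have := broom_dist_le_sub huv hv
      omega
    · have := broom_dist_le_sub hvu hu
      rw [SimpleGraph.dist_comm] at this
      omega
  · have := to_center hu
    have := pendant_to_center hv
    omega
  · have := to_center hv
    have := pendant_to_center hu
    omega
  · have := pendant_to_center hu
    have := pendant_to_center hv
    omega

theorem eccentricity_broom (hΔ : 2 ≤ Δ) (hp : 1 ≤ p) (v : Fin (Δ + p)) :
    eccentricity (broom (Δ + p) Δ) v = max (min (v : ℕ) (p + 1)) (p + 1 - min (v : ℕ) (p + 1)) := by
  refine le_antisymm (Finset.sup_le fun u _ => broom_dist_le (by omega) hp v u) (max_le ?_ ?_)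
  · refine le_trans ?_ (dist_le_eccentricity _ v ⟨0, by omega⟩)
    simpa [SimpleGraph.dist_comm] using broom_min_le_min_add_dist (by omega) ⟨0, by omega⟩ v
  · refine le_trans ?_ (dist_le_eccentricity _ v ⟨p + 1, by omega⟩)
    have := broom_min_le_min_add_dist (by omega) v ⟨p + 1, by omega⟩
    simp only [min_self] at this
    omega

theorem sum_eccentricity_broom (hΔ : 2 ≤ Δ) (hp : 1 ≤ p) :
    ∑ v, eccentricity (broom (Δ + p) Δ) v =
      ∑ i ∈ Finset.range (p + 1), max i (p + 1 - i) + (Δ - 1) * (p + 1) := by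
  simp_rw [eccentricity_broom hΔ hp]
  rw [Fin.sum_univ_eq_sum_range (fun i => max (min i (p + 1)) (p + 1 - min i (p + 1))),
    show Δ + p = (p + 1) + (Δ - 1) by omega, Finset.sum_range_add]
  congr 1
  · refine Finset.sum_congr rfl fun i hi => ?_
    rw [min_eq_left (by rw [Finset.mem_range] at hi; omega)]
  · simp

theorem broom_indepNum_le (hΔ : 2 ≤ Δ) :
    (broom (Δ + p) Δ).indepNum ≤ (p + 1) / 2 + (Δ - 1) := by
  obtain ⟨s, hs⟩ := (broom (Δ + p) Δ).exists_isNIndepSet_indepNum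
  rw [← hs.card_eq, ← Finset.card_range ((p + 1) / 2 + (Δ - 1))]
  -- The fibres are the handle edges `{2k, 2k+1}` below `p`, the edge `{p, p+1}` and singletons.
  refine hs.isIndepSet.card_le_of_isClique_fiber
    (f := fun v : Fin (Δ + p) => if (v : ℕ) < p then v / 2 else (p + 1) / 2 + (v - (p + 1)))
    (fun v _ => ?_) fun _ u hu v hv huv => ?_
  · have := v.isLt
    simp only [Finset.coe_range, Set.mem_Iio]
    split_ifs <;> omega
  · simp only [Set.mem_preimage, Set.mem_singleton_iff] at hu hv
    have := Fin.val_ne_of_ne huv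
    rw [broom_adj_iff]
    split_ifs at hu hv <;> omega

theorem le_broom_indepNum :
    (p + 1) / 2 + (Δ - 1) ≤ (broom (Δ + p) Δ).indepNum := by
  let e : Fin ((p + 1) / 2 + (Δ - 1)) → Fin (Δ + p) := fun k =>
    if hk : (k : ℕ) < (p + 1) / 2 then ⟨2 * k, by omega⟩ else ⟨k - (p + 1) / 2 + (p + 1), by omega⟩
  have he : Function.Injective e := fun k l hkl => by
    simp only [e] at hkl
    split_ifs at hkl <;> simp only [Fin.mk.injEq] at hkl <;> omega
  have hind : (broom (Δ + p) Δ).IsIndepSet (Finset.univ.image e : Finset (Fin (Δ + p))) := by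
    simp only [Finset.coe_image, Finset.coe_univ, Set.image_univ]
    rintro _ ⟨k, rfl⟩ _ ⟨l, rfl⟩ hkl
    have : (k : ℕ) ≠ l := fun h => hkl (congrArg e (Fin.ext h))
    rw [broom_adj_iff]
    simp only [e]
    split_ifs <;> dsimp only <;> omega
  simpa [Finset.card_image_of_injective _ he] using hind.card_le_indepNum

theorem indepNum_broom (hΔ : 2 ≤ Δ) :
    _root_.indepNum (broom (Δ + p) Δ) = (p + 1) / 2 + (Δ - 1) := by
  rw [indepNum_eq_simpleGraph_indepNum]
  exact (broom_indepNum_le hΔ).antisymm le_broom_indepNum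

theorem avgEcc_add_indepNum_broom_eq (hΔ : 2 ≤ Δ) (hp : 1 ≤ p) :
    avgEcc (broom (Δ + p) Δ) + (_root_.indepNum (broom (Δ + p) Δ) : ℝ) =
      ((∑ i ∈ Finset.range (p + 1), max i (p + 1 - i) : ℕ) + ((Δ : ℝ) - 1) * (p + 1)) / (Δ + p) +
        ((p + 1) / 2 : ℕ) + ((Δ : ℝ) - 1) := by
  rw [avgEcc, ← Nat.cast_sum, sum_eccentricity_broom hΔ hp, indepNum_broom hΔ, Fintype.card_fin]
  push_cast [Nat.cast_sub (by omega : 1 ≤ Δ)]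
  ring

end Broom

/-- For `2 ≤ Δ ≤ n - 1`,
`ecc (B(n,Δ)) + α(B(n,Δ)) = 5n/4 - Δ(Δ-2)/(4n) - 1/2` if `n - Δ` is even, and
`ecc (B(n,Δ)) + α(B(n,Δ)) = 5n/4 - Δ(Δ-2)/(4n) - 1/(4n)` if `n - Δ` is odd. -/
theorem avgEcc_add_indepNum_broom {n Δ : ℕ} (hΔ : 2 ≤ Δ) (hΔn : Δ ≤ n - 1) :
    (Even (n - Δ) →
      avgEcc (broom n Δ) + (_root_.indepNum (broom n Δ) : ℝ) =
        5 * (n : ℝ) / 4 - (Δ : ℝ) * ((Δ : ℝ) - 2) / (4 * n) - 1 / 2) ∧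
    (Odd (n - Δ) →
      avgEcc (broom n Δ) + (_root_.indepNum (broom n Δ) : ℝ) =
        5 * (n : ℝ) / 4 - (Δ : ℝ) * ((Δ : ℝ) - 2) / (4 * n) - 1 / (4 * n)) := by
  obtain ⟨p, rfl⟩ : ∃ p, n = Δ + p := ⟨n - Δ, by omega⟩
  have hp : 1 ≤ p := by omega
  have hn : (Δ : ℝ) + p ≠ 0 := by positivity
  have hS := four_mul_sum_range_max_sub_add_mod_two p
  rw [Nat.add_sub_cancel_left, avgEcc_add_indepNum_broom_eq hΔ hp, Nat.cast_add]
  generalize ∑ i ∈ Finset.range (p + 1), max i (p + 1 - i) = S at hS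
  refine ⟨fun hpar => ?_, fun hpar => ?_⟩
  · rw [Nat.even_iff] at hpar
    have hα : (((p + 1) / 2 : ℕ) : ℝ) = p / 2 := by
      rw [eq_div_iff two_ne_zero]; exact_mod_cast (by omega : (p + 1) / 2 * 2 = p)
    have hS' : (S : ℝ) = (3 * (p + 1) ^ 2 + 1) / 4 := by
      rw [eq_div_iff four_ne_zero]; exact_mod_cast (by omega : S * 4 = 3 * (p + 1) ^ 2 + 1)
    rw [hα, hS']
    field_simp
    ring
  · rw [Nat.odd_iff] at hpar
    have hα : (((p + 1) / 2 : ℕ) : ℝ) = (p + 1) / 2 := by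
      rw [eq_div_iff two_ne_zero]; exact_mod_cast (by omega : (p + 1) / 2 * 2 = p + 1)
    have hS' : (S : ℝ) = 3 * (p + 1) ^ 2 / 4 := by
      rw [eq_div_iff four_ne_zero]; exact_mod_cast (by omega : S * 4 = 3 * (p + 1) ^ 2)
    rw [hα, hS']
    field_simp
    ring
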